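/- arXiv:1607.02753 — 2 statements merged into one kernel-verified Lean document; each statement's English description precedes it below -/
import Mathlib

section
/- Let J, K ⊂ ℝ be compact intervals, c an endpoint of J, and f ∈ C^∞(J) pliable at c. If d : K → J is a C^∞ diffeomorphism, then f ∘ d ∈ C^∞(K) is pliable at d^{−1}(c). -/
open Set Filter Topology

noncomputable section

/-- The `C^r` norm `‖f‖_{C^r(J)} = ∑_{i=0}^{r} max_J |f^{(i)}|` of a function on a set
`J ⊆ ℝ` (derivatives taken within `J`). -/
def CrNorm (r : ℕ) (f : ℝ → ℝ) (J : Set ℝ) : ℝ :=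
  ∑ i ∈ Finset.range (r + 1), ⨆ x : J, |iteratedDerivWithin i f J (x : ℝ)|

/-- The support of `g` relative to the interval `[a,b]`: the closure of the set of points
of `[a,b]` where `g` is nonzero. -/
def suppOn (a b : ℝ) (g : ℝ → ℝ) : Set ℝ :=
  closure {x | x ∈ Set.Icc a b ∧ g x ≠ 0}

/-- The data `(k₀, cs, g)` is a series witnessing that `f` is pliable at the endpoint `c`
of the interval `[a,b]`:
* `f = Σ_{k ≥ k₀} cs k • g k` pointwise on `[a,b]`;
* the `cs k` are positive and super-exponentially converge to `0`;
* the `g k` are `C^∞` on `[a,b]`, their supports form a locally finite family of compact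
  subsets of `[a,b] ∖ {c}`, and for every `r` the `C^r` norms of `g k` grow at most
  exponentially in `k`;
* there is `L > 0` such that whenever `0 < 2ε < b - a`, the set `J_ε` of indices `k ≥ k₀`
  whose support meets `{x ∈ [a,b] : ε ≤ |x - c| ≤ 2ε}` has at most `L` elements, and
  `2^{-kL} ≤ ε` for every `k ∈ J_ε`. -/
structure IsPliableSeries (a b c : ℝ) (f : ℝ → ℝ) (k₀ : ℤ) (cs : ℤ → ℝ)
    (g : ℤ → ℝ → ℝ) : Prop where
  sum_eq : ∀ x ∈ Set.Icc a b,
    HasSum (fun k : {k : ℤ // k₀ ≤ k} => cs k.val * g k.val x) (f x)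
  cs_pos : ∀ k : ℤ, k₀ ≤ k → 0 < cs k
  cs_superexp : ∀ γ : ℝ,
    Tendsto (fun k : ℤ => (2 : ℝ) ^ (γ * (k : ℝ)) * cs k) atTop (𝓝 0)
  g_smooth : ∀ k : ℤ, k₀ ≤ k → ContDiffOn ℝ (⊤ : ℕ∞) (g k) (Set.Icc a b)
  supp_compact : ∀ k : ℤ, k₀ ≤ k → IsCompact (suppOn a b (g k))
  supp_subset : ∀ k : ℤ, k₀ ≤ k → suppOn a b (g k) ⊆ Set.Icc a b \ {c}
  supp_locFin : ∀ x ∈ Set.Icc a b \ {c}, ∃ U ∈ 𝓝 x,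
    {k : ℤ | k₀ ≤ k ∧ (suppOn a b (g k) ∩ U).Nonempty}.Finite
  norm_growth : ∀ r : ℕ, ∃ γ M : ℝ, ∀ k : ℤ, k₀ ≤ k →
    (2 : ℝ) ^ (γ * (k : ℝ)) * CrNorm r (g k) (Set.Icc a b) ≤ M
  index_bound : ∃ L : ℕ, 0 < L ∧ ∀ ε : ℝ, 0 < ε → 2 * ε < b - a →
    {k : ℤ | k₀ ≤ k ∧ (suppOn a b (g k) ∩
      {x ∈ Set.Icc a b | ε ≤ |x - c| ∧ |x - c| ≤ 2 * ε}).Nonempty}.Finite ∧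
    {k : ℤ | k₀ ≤ k ∧ (suppOn a b (g k) ∩
      {x ∈ Set.Icc a b | ε ≤ |x - c| ∧ |x - c| ≤ 2 * ε}).Nonempty}.ncard ≤ L ∧
    ∀ k : ℤ, k₀ ≤ k →
      (suppOn a b (g k) ∩ {x ∈ Set.Icc a b | ε ≤ |x - c| ∧ |x - c| ≤ 2 * ε}).Nonempty →
      (2 : ℝ) ^ (-(k : ℝ) * (L : ℝ)) ≤ ε

/-- `f` is pliable at the endpoint `c` of `[a,b]`. -/
def Pliable (a b c : ℝ) (f : ℝ → ℝ) : Prop :=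
  ∃ (k₀ : ℤ) (cs : ℤ → ℝ) (g : ℤ → ℝ → ℝ), IsPliableSeries a b c f k₀ cs g

/-!
Composing the pliable series `f = ∑ cₖ gₖ` with `d` gives the series `f ∘ d = ∑ cₖ (gₖ ∘ d)`,
once the indices are shifted to start at `1`. Supports are transported by the homeomorphism
`e = d⁻¹`, and Faà di Bruno's bound multiplies the `C^r` norms by a constant. For the annulus
condition, let `Λ` be a common Lipschitz constant of `d` and `e`: then `d` maps the annulus of
radius `ε` around `e c` into the union of the region `|y - c| ≥ (b - a) / 4`, met by finitely
many supports, and of `m` dyadic annuli of radii `2ⁱ ε / Λ` around `c`, where `2 Λ² < 2ᵐ`.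
The factor `Λ` lost in the radii is absorbed into `2^{-kL}` by enlarging `L`, which is where
`k ≥ 1` is needed.
-/

open scoped NNReal

def annulus (a b c ε : ℝ) : Set ℝ :=
  {x ∈ Icc a b | ε ≤ |x - c| ∧ |x - c| ≤ 2 * ε}

def indicesMeeting (a b : ℝ) (k₀ : ℤ) (g : ℤ → ℝ → ℝ) (A : Set ℝ) : Set ℤ :=
  {k | k₀ ≤ k ∧ (suppOn a b (g k) ∩ A).Nonempty}

/-- `IsPliableSeries.index_bound` unfolds to `∃ L, 0 < L ∧ AnnulusIndexBound a b c k₀ g L`. -/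
def AnnulusIndexBound (a b c : ℝ) (k₀ : ℤ) (g : ℤ → ℝ → ℝ) (L : ℕ) : Prop :=
  ∀ ε : ℝ, 0 < ε → 2 * ε < b - a →
    (indicesMeeting a b k₀ g (annulus a b c ε)).Finite ∧
    (indicesMeeting a b k₀ g (annulus a b c ε)).ncard ≤ L ∧
    ∀ k : ℤ, k₀ ≤ k → (suppOn a b (g k) ∩ annulus a b c ε).Nonempty →
      (2 : ℝ) ^ (-(k : ℝ) * (L : ℝ)) ≤ ε

lemma suppOn_subset_Icc (a b : ℝ) (g : ℝ → ℝ) : suppOn a b g ⊆ Icc a b :=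
  closure_minimal (fun _ hx => hx.1) isClosed_Icc

lemma suppOn_comp_eq_image {a b a' b' : ℝ} {d e : ℝ → ℝ} (g : ℝ → ℝ)
    (hde : ∀ x ∈ Icc a' b', d x ∈ Icc a b ∧ e (d x) = x)
    (hed : ∀ y ∈ Icc a b, e y ∈ Icc a' b' ∧ d (e y) = y) (he : ContinuousOn e (Icc a b)) :
    suppOn a' b' (fun x => g (d x)) = e '' suppOn a b g := by
  have hset : {x | x ∈ Icc a' b' ∧ g (d x) ≠ 0} = e '' {y | y ∈ Icc a b ∧ g y ≠ 0} := by
    ext x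
    constructor
    · rintro ⟨hx, hgx⟩
      exact ⟨d x, ⟨(hde x hx).1, hgx⟩, (hde x hx).2⟩
    · rintro ⟨y, ⟨hy, hgy⟩, rfl⟩
      exact ⟨(hed y hy).1, by rwa [(hed y hy).2]⟩
  rw [suppOn, hset, suppOn, ← image_closure_of_isCompact
    (isCompact_Icc.of_isClosed_subset isClosed_closure (suppOn_subset_Icc a b g))
    (he.mono (suppOn_subset_Icc a b g))]

section indicesMeeting

variable {a b : ℝ} {k₀ : ℤ} {g : ℤ → ℝ → ℝ}

lemma indicesMeeting_mono {A B : Set ℝ} (h : A ⊆ B) :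
    indicesMeeting a b k₀ g A ⊆ indicesMeeting a b k₀ g B :=
  fun _ ⟨hk, hne⟩ => ⟨hk, hne.mono (inter_subset_inter_right _ h)⟩

lemma indicesMeeting_union (A B : Set ℝ) :
    indicesMeeting a b k₀ g (A ∪ B) = indicesMeeting a b k₀ g A ∪ indicesMeeting a b k₀ g B := by
  ext k
  simp only [indicesMeeting, inter_union_distrib_left, union_nonempty, mem_ofPred_eq, mem_union,
    and_or_left]

lemma indicesMeeting_biUnion {ι : Type*} (I : Finset ι) (A : ι → Set ℝ) :
    indicesMeeting a b k₀ g (⋃ i ∈ I, A i) = ⋃ i ∈ I, indicesMeeting a b k₀ g (A i) := by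
  ext k
  simp [indicesMeeting, inter_iUnion₂, nonempty_iUnion]

lemma indicesMeeting_shift (s : ℤ) (A : Set ℝ) :
    indicesMeeting a b (k₀ + s) (fun k => g (k - s)) A =
      (· + s) '' indicesMeeting a b k₀ g A := by
  ext k
  constructor
  · rintro ⟨hk, hne⟩
    exact ⟨k - s, ⟨by omega, hne⟩, by ring⟩
  · rintro ⟨j, ⟨hj, hne⟩, rfl⟩
    exact ⟨show k₀ + s ≤ j + s by omega, by simpa using hne⟩

lemma indicesMeeting_comp_subset {a' b' : ℝ} {d e : ℝ → ℝ}
    (hde : ∀ x ∈ Icc a' b', d x ∈ Icc a b ∧ e (d x) = x)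
    (hed : ∀ y ∈ Icc a b, e y ∈ Icc a' b' ∧ d (e y) = y) (he : ContinuousOn e (Icc a b))
    (A : Set ℝ) :
    indicesMeeting a' b' k₀ (fun k x => g k (d x)) A ⊆
      indicesMeeting a b k₀ g (d '' (A ∩ Icc a' b')) := by
  rintro k ⟨hk, z, hzs, hzA⟩
  rw [suppOn_comp_eq_image (g k) hde hed he] at hzs
  obtain ⟨y, hy, rfl⟩ := hzs
  have hyJ := hed y (suppOn_subset_Icc a b _ hy)
  exact ⟨hk, y, hy, e y, ⟨hzA, hyJ.1⟩, hyJ.2⟩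

end indicesMeeting

lemma crNorm_nonneg (r : ℕ) (f : ℝ → ℝ) (J : Set ℝ) : 0 ≤ CrNorm r f J :=
  Finset.sum_nonneg fun _ _ => Real.iSup_nonneg fun _ => abs_nonneg _

lemma abs_iteratedDerivWithin_le_crNorm {r i : ℕ} (hi : i ≤ r) {a b : ℝ} (hab : a < b)
    {f : ℝ → ℝ} (hf : ContDiffOn ℝ (⊤ : ℕ∞) f (Icc a b)) {x : ℝ} (hx : x ∈ Icc a b) :
    |iteratedDerivWithin i f (Icc a b) x| ≤ CrNorm r f (Icc a b) := by
  have hcont : ContinuousOn (fun z => |iteratedDerivWithin i f (Icc a b) z|) (Icc a b) :=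
    (hf.continuousOn_iteratedDerivWithin (by exact_mod_cast le_top) (uniqueDiffOn_Icc hab)).abs
  have hbdd : BddAbove (range fun z : Icc a b => |iteratedDerivWithin i f (Icc a b) z|) := by
    simpa only [image_eq_range] using (isCompact_Icc.image_of_continuousOn hcont).bddAbove
  refine (le_ciSup hbdd ⟨x, hx⟩).trans ?_
  exact Finset.single_le_sum (f := fun j => ⨆ z : Icc a b, |iteratedDerivWithin j f (Icc a b) z|)
    (fun j _ => Real.iSup_nonneg fun _ => abs_nonneg _) (Finset.mem_range.2 (by omega))

lemma exists_crNorm_comp_le {a b a' b' : ℝ} (hab : a < b) (ha'b' : a' < b') {d : ℝ → ℝ}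
    (hd : ContDiffOn ℝ (⊤ : ℕ∞) d (Icc a' b')) (hmap : MapsTo d (Icc a' b') (Icc a b)) (r : ℕ) :
    ∃ C, 0 ≤ C ∧ ∀ g : ℝ → ℝ, ContDiffOn ℝ (⊤ : ℕ∞) g (Icc a b) →
      CrNorm r (fun x => g (d x)) (Icc a' b') ≤ C * CrNorm r g (Icc a b) := by
  obtain ⟨B, hB⟩ := isCompact_Icc.exists_bound_of_continuousOn (continuousOn_finsetSum
    (Finset.range (r + 1)) fun i _ => (hd.continuousOn_iteratedFDerivWithin
      (m := i) (by exact_mod_cast le_top) (uniqueDiffOn_Icc ha'b')).norm)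
  set D := max B 1
  have hD : ∀ i, 1 ≤ i → i ≤ r → ∀ x ∈ Icc a' b',
      ‖iteratedFDerivWithin ℝ i d (Icc a' b') x‖ ≤ D ^ i := fun i hi1 hir x hx =>
    calc ‖iteratedFDerivWithin ℝ i d (Icc a' b') x‖
        ≤ ∑ j ∈ Finset.range (r + 1), ‖iteratedFDerivWithin ℝ j d (Icc a' b') x‖ :=
          Finset.single_le_sum (f := fun j => ‖iteratedFDerivWithin ℝ j d (Icc a' b') x‖)
            (fun j _ => norm_nonneg _) (Finset.mem_range.2 (by omega))
      _ ≤ D := (le_abs_self _).trans ((hB x hx).trans (le_max_left _ _))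
      _ ≤ D ^ i := le_self_pow₀ (le_max_right _ _) (by omega)
  refine ⟨(r + 1) * (r.factorial * D ^ r), by positivity, fun g hg => ?_⟩
  have hderiv : ∀ i ≤ r, ∀ x ∈ Icc a' b',
      |iteratedDerivWithin i (fun x => g (d x)) (Icc a' b') x| ≤
        r.factorial * D ^ r * CrNorm r g (Icc a b) := by
    intro i hi x hx
    rw [← Real.norm_eq_abs, ← norm_iteratedFDerivWithin_eq_norm_iteratedDerivWithin]
    refine (norm_iteratedFDerivWithin_comp_le (g := g) (C := CrNorm r g (Icc a b))
      (N := ((⊤ : ℕ∞) : WithTop ℕ∞)) hg hd (by exact_mod_cast le_top) (uniqueDiffOn_Icc hab)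
      (uniqueDiffOn_Icc ha'b') hmap hx
      (fun j hj => ?_) (fun j hj1 hj2 => hD j hj1 (hj2.trans hi) x hx)).trans ?_
    · rw [norm_iteratedFDerivWithin_eq_norm_iteratedDerivWithin, Real.norm_eq_abs]
      exact abs_iteratedDerivWithin_le_crNorm (hj.trans hi) hab hg (hmap hx)
    · have hfac : (i.factorial : ℝ) * D ^ i ≤ r.factorial * D ^ r :=
        mul_le_mul (by exact_mod_cast Nat.factorial_le hi)
          (pow_le_pow_right₀ (le_max_right _ _) hi) (by positivity) (by positivity)
      nlinarith [crNorm_nonneg r g (Icc a b)]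
  have : Nonempty (Icc a' b') := ⟨⟨a', left_mem_Icc.2 ha'b'.le⟩⟩
  calc CrNorm r (fun x => g (d x)) (Icc a' b')
      ≤ ∑ _i ∈ Finset.range (r + 1), r.factorial * D ^ r * CrNorm r g (Icc a b) :=
        Finset.sum_le_sum fun i hi => ciSup_le fun x =>
          hderiv i (Nat.lt_succ_iff.1 (Finset.mem_range.1 hi)) x x.2
    _ = (r + 1) * (r.factorial * D ^ r) * CrNorm r g (Icc a b) := by
        rw [Finset.sum_const, Finset.card_range, nsmul_eq_mul]
        push_cast
        ring

lemma two_rpow_mul_intCast_eq (γ : ℝ) (k s : ℤ) :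
    (2 : ℝ) ^ (γ * k) = 2 ^ (γ * s) * 2 ^ (γ * ((k - s : ℤ) : ℝ)) := by
  rw [← Real.rpow_add two_pos]
  push_cast
  ring_nf

section IsPliableSeries

variable {a b c : ℝ} {f : ℝ → ℝ} {k₀ : ℤ} {cs : ℤ → ℝ} {g : ℤ → ℝ → ℝ}

lemma IsPliableSeries.finite_indicesMeeting (H : IsPliableSeries a b c f k₀ cs g) {F : Set ℝ}
    (hF : IsCompact F) (hFc : F ⊆ Icc a b \ {c}) : (indicesMeeting a b k₀ g F).Finite := by
  choose U hU hfin using fun x (hx : x ∈ F) => H.supp_locFin x (hFc hx)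
  obtain ⟨t, ht⟩ := hF.elim_nhds_subcover' U hU
  have hcover := indicesMeeting_mono (a := a) (b := b) (k₀ := k₀) (g := g) ht
  rw [indicesMeeting_biUnion] at hcover
  exact (t.finite_toSet.biUnion fun y _ => hfin y y.2).subset hcover

lemma IsPliableSeries.finite_indicesMeeting_far (H : IsPliableSeries a b c f k₀ cs g)
    (hab : a < b) : (indicesMeeting a b k₀ g (Icc a b ∩ {y | (b - a) / 4 ≤ |y - c|})).Finite := by
  refine H.finite_indicesMeeting (isCompact_Icc.of_isClosed_subset
    (isClosed_Icc.inter (isClosed_le continuous_const (by fun_prop))) inter_subset_left) ?_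
  rintro y ⟨hyJ, hy⟩
  refine ⟨hyJ, ?_⟩
  rintro rfl
  simp only [mem_ofPred_eq, sub_self, abs_zero] at hy
  linarith

lemma IsPliableSeries.shift (H : IsPliableSeries a b c f k₀ cs g) {s : ℤ} (hs : 0 ≤ s) :
    IsPliableSeries a b c f (k₀ + s) (fun k => cs (k - s)) (fun k => g (k - s)) where
  sum_eq x hx := (Equiv.hasSum_iff ((Equiv.subRight s).subtypeEquiv fun k => by
    simp [le_sub_iff_add_le])).2 (H.sum_eq x hx)
  cs_pos k hk := H.cs_pos _ (by omega)
  cs_superexp γ := by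
    have h := ((H.cs_superexp γ).comp (tendsto_atTop_add_const_right atTop (-s) tendsto_id)
      ).const_mul ((2 : ℝ) ^ (γ * s))
    rw [mul_zero] at h
    refine h.congr fun k => ?_
    simp only [Function.comp_apply, id, ← sub_eq_add_neg, two_rpow_mul_intCast_eq γ k s]
    ring
  g_smooth k hk := H.g_smooth _ (by omega)
  supp_compact k hk := H.supp_compact _ (by omega)
  supp_subset k hk := H.supp_subset _ (by omega)
  supp_locFin x hx := by
    obtain ⟨U, hU, hfin⟩ := H.supp_locFin x hx
    refine ⟨U, hU, ?_⟩
    change (indicesMeeting a b (k₀ + s) (fun k => g (k - s)) U).Finite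
    rw [indicesMeeting_shift]
    exact hfin.image _
  norm_growth r := by
    obtain ⟨γ, M, hM⟩ := H.norm_growth r
    refine ⟨γ, 2 ^ (γ * s) * M, fun k hk => ?_⟩
    rw [two_rpow_mul_intCast_eq γ k s, mul_assoc]
    exact mul_le_mul_of_nonneg_left (hM _ (by omega)) (by positivity)
  index_bound := by
    obtain ⟨L, hL0, hL⟩ := H.index_bound
    refine ⟨L, hL0, fun ε hε hεab => ?_⟩
    obtain ⟨hfin, hcard, hexp⟩ := hL ε hε hεab
    change (indicesMeeting a b (k₀ + s) (fun k => g (k - s)) (annulus a b c ε)).Finite ∧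
      (indicesMeeting a b (k₀ + s) (fun k => g (k - s)) (annulus a b c ε)).ncard ≤ L ∧ _
    rw [indicesMeeting_shift, ncard_image_of_injective _ (add_left_injective s)]
    refine ⟨hfin.image _, hcard, fun k hk hne => (hexp (k - s) (by omega) hne).trans' ?_⟩
    have hsL : (0 : ℝ) ≤ s * L := mul_nonneg (Int.cast_nonneg hs) L.cast_nonneg
    exact Real.rpow_le_rpow_of_exponent_le one_le_two (by push_cast; linarith)

lemma Pliable.exists_isPliableSeries_one_le (h : Pliable a b c f) :
    ∃ k₀ cs g, 1 ≤ k₀ ∧ IsPliableSeries a b c f k₀ cs g := by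
  obtain ⟨k₀, cs, g, H⟩ := h
  exact ⟨_, _, _, by omega, H.shift (s := (1 - k₀).toNat) (by omega)⟩

end IsPliableSeries

lemma exists_pow_mul_le_lt_two_mul {δ t : ℝ} {m : ℕ} (hδ : 0 < δ) (h₁ : δ ≤ t)
    (h₂ : t < δ * 2 ^ m) : ∃ i < m, δ * 2 ^ i ≤ t ∧ t < 2 * (δ * 2 ^ i) := by
  obtain ⟨i, hi₁, hi₂⟩ := exists_nat_pow_near (by rwa [one_le_div hδ]) one_lt_two (x := t / δ)
  rw [le_div_iff₀ hδ] at hi₁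
  rw [div_lt_iff₀ hδ, pow_succ] at hi₂
  refine ⟨i, (pow_lt_pow_iff_right₀ (by norm_num : (1 : ℝ) < 2)).1 ?_, by linarith, by linarith⟩
  exact lt_of_mul_lt_mul_left (by linarith) hδ.le

lemma two_rpow_neg_mul_le {k : ℤ} (hk : 1 ≤ k) {L N L' : ℕ} (hL' : L + N ≤ L') {A ε : ℝ}
    (hε : 0 ≤ ε) (hA : (2 : ℝ) ^ (-(k : ℝ) * L) ≤ A * ε) (hAN : A ≤ 2 ^ N) :
    (2 : ℝ) ^ (-(k : ℝ) * L') ≤ ε := by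
  have hk' : (1 : ℝ) ≤ k := by exact_mod_cast hk
  have hL'' : (L : ℝ) + N ≤ L' := by exact_mod_cast hL'
  calc (2 : ℝ) ^ (-(k : ℝ) * L') ≤ 2 ^ (-(k : ℝ) * L - N) :=
        Real.rpow_le_rpow_of_exponent_le one_le_two
          (by nlinarith [(Nat.cast_nonneg N : (0 : ℝ) ≤ N)])
    _ = 2 ^ (-(k : ℝ) * L) / 2 ^ N := by rw [Real.rpow_sub two_pos, Real.rpow_natCast]
    _ ≤ ε := by
        rw [div_le_iff₀ (by positivity)]
        nlinarith

lemma mem_far_or_mem_annulus {a b c ε Λ y : ℝ} {m : ℕ} (hΛ : 0 < Λ) (hε : 0 < ε)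
    (hm : 2 * Λ ^ 2 < 2 ^ m) (hy : y ∈ Icc a b) (h₁ : ε ≤ Λ * |y - c|)
    (h₂ : |y - c| ≤ 2 * Λ * ε) :
    y ∈ Icc a b ∩ {y | (b - a) / 4 ≤ |y - c|} ∩ {y | |y - c| ≤ 2 * Λ * ε} ∨
      ∃ i ∈ (Finset.range m).filter
          (fun i => 2 * (ε / Λ * 2 ^ i) < b - a ∧ ε / Λ * 2 ^ i ≤ 2 * Λ * ε),
        y ∈ annulus a b c (ε / Λ * 2 ^ i) := by
  by_cases hfar : (b - a) / 4 ≤ |y - c|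
  · exact Or.inl ⟨⟨hy, hfar⟩, h₂⟩
  have hδ : 0 < ε / Λ := div_pos hε hΛ
  have hlow : ε / Λ ≤ |y - c| := by rwa [div_le_iff₀ hΛ, mul_comm]
  have hhigh : |y - c| < ε / Λ * 2 ^ m := calc
    |y - c| ≤ ε / Λ * (2 * Λ ^ 2) := by field_simp; linarith
    _ < ε / Λ * 2 ^ m := mul_lt_mul_of_pos_left hm hδ
  obtain ⟨i, him, hi₁, hi₂⟩ := exists_pow_mul_le_lt_two_mul hδ hlow hhigh
  refine Or.inr ⟨i, Finset.mem_filter.2 ⟨Finset.mem_range.2 him, ?_, hi₁.trans h₂⟩,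
    hy, hi₁, hi₂.le⟩
  linarith [abs_nonneg (y - c)]

lemma bounds_of_mem_image_annulus {a b c a' b' ε : ℝ} {Λ : ℝ≥0} {d e : ℝ → ℝ}
    (hd : LipschitzOnWith Λ d (Icc a' b')) (he : LipschitzOnWith Λ e (Icc a b))
    (hcJ : c ∈ Icc a b) (hde : ∀ x ∈ Icc a' b', d x ∈ Icc a b ∧ e (d x) = x)
    (hed : ∀ y ∈ Icc a b, e y ∈ Icc a' b' ∧ d (e y) = y) {y : ℝ}
    (hy : y ∈ d '' (annulus a' b' (e c) ε ∩ Icc a' b')) :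
    y ∈ Icc a b ∧ ε ≤ Λ * |y - c| ∧ |y - c| ≤ 2 * Λ * ε := by
  obtain ⟨z, ⟨⟨hzK, hz₁, hz₂⟩, -⟩, rfl⟩ := hy
  have hez := he.dist_le_mul (d z) (hde z hzK).1 c hcJ
  have hdz := hd.dist_le_mul z hzK (e c) (hed c hcJ).1
  rw [Real.dist_eq, Real.dist_eq, (hde z hzK).2] at hez
  rw [Real.dist_eq, Real.dist_eq, (hed c hcJ).2] at hdz
  exact ⟨(hde z hzK).1, hz₁.trans hez, by nlinarith [Λ.coe_nonneg]⟩

section comp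

variable {a b c a' b' : ℝ} {f : ℝ → ℝ} {k₀ : ℤ} {cs : ℤ → ℝ} {g : ℤ → ℝ → ℝ} {d e : ℝ → ℝ}

lemma indicesMeeting_comp_annulus_subset {ε : ℝ} (hε : 0 < ε) {Λ : ℝ≥0} (hΛ : 0 < Λ) {m : ℕ}
    (hm : 2 * (Λ : ℝ) ^ 2 < 2 ^ m) (hcJ : c ∈ Icc a b)
    (hd : LipschitzOnWith Λ d (Icc a' b')) (he : LipschitzOnWith Λ e (Icc a b))
    (hde : ∀ x ∈ Icc a' b', d x ∈ Icc a b ∧ e (d x) = x)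
    (hed : ∀ y ∈ Icc a b, e y ∈ Icc a' b' ∧ d (e y) = y) (hec : ContinuousOn e (Icc a b)) :
    indicesMeeting a' b' k₀ (fun k x => g k (d x)) (annulus a' b' (e c) ε) ⊆
      indicesMeeting a b k₀ g (Icc a b ∩ {y | (b - a) / 4 ≤ |y - c|} ∩
          {y | |y - c| ≤ 2 * Λ * ε}) ∪
        ⋃ i ∈ (Finset.range m).filter
            (fun i => 2 * (ε / Λ * 2 ^ i) < b - a ∧ ε / Λ * 2 ^ i ≤ 2 * Λ * ε),
          indicesMeeting a b k₀ g (annulus a b c (ε / Λ * 2 ^ i)) := by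
  rw [← indicesMeeting_biUnion, ← indicesMeeting_union]
  refine (indicesMeeting_comp_subset hde hed hec _).trans (indicesMeeting_mono fun y hy => ?_)
  obtain ⟨hyJ, h₁, h₂⟩ := bounds_of_mem_image_annulus hd he hcJ hde hed hy
  rcases mem_far_or_mem_annulus hΛ hε hm hyJ h₁ h₂ with hfar | ⟨i, hi, hyi⟩
  · exact Or.inl hfar
  · exact Or.inr (mem_biUnion hi hyi)

lemma IsPliableSeries.exists_annulusIndexBound_comp (H : IsPliableSeries a b c f k₀ cs g)
    (hk₀ : 1 ≤ k₀) (hab : a < b) (hcJ : c ∈ Icc a b) {Λ : ℝ≥0} (hΛ : 0 < Λ)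
    (hd : LipschitzOnWith Λ d (Icc a' b')) (he : LipschitzOnWith Λ e (Icc a b))
    (hde : ∀ x ∈ Icc a' b', d x ∈ Icc a b ∧ e (d x) = x)
    (hed : ∀ y ∈ Icc a b, e y ∈ Icc a' b' ∧ d (e y) = y) (hec : ContinuousOn e (Icc a b)) :
    ∃ L', 0 < L' ∧ AnnulusIndexBound a' b' (e c) k₀ (fun k x => g k (d x)) L' := by
  obtain ⟨L, hL0, hL⟩ := H.index_bound
  set F := Icc a b ∩ {y | (b - a) / 4 ≤ |y - c|}
  have hS : (indicesMeeting a b k₀ g F).Finite := H.finite_indicesMeeting_far hab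
  obtain ⟨m, hm⟩ := pow_unbounded_of_one_lt (2 * (Λ : ℝ) ^ 2) one_lt_two
  obtain ⟨N, hN⟩ := pow_unbounded_of_one_lt (max (2 * Λ) (8 * Λ / (b - a)) : ℝ) one_lt_two
  refine ⟨(m + 1) * L + (indicesMeeting a b k₀ g F).ncard + N, by positivity,
    fun ε hε _ => ?_⟩
  have hcover := indicesMeeting_comp_annulus_subset (g := g) (k₀ := k₀) hε hΛ hm hcJ hd he hde hed hec
  set I := (Finset.range m).filter
    (fun i => 2 * (ε / Λ * 2 ^ i) < b - a ∧ ε / Λ * 2 ^ i ≤ 2 * Λ * ε)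
  have hI : ∀ i ∈ I, _ := fun i hi =>
    hL (ε / Λ * 2 ^ i) (by positivity) (Finset.mem_filter.1 hi).2.1
  have hfinNear : (⋃ i ∈ I, indicesMeeting a b k₀ g (annulus a b c (ε / Λ * 2 ^ i))).Finite :=
    I.finite_toSet.biUnion fun i hi => (hI i hi).1
  have hfinFar := hS.subset (indicesMeeting_mono (g := g) (k₀ := k₀) (inter_subset_left
    (t := {y | |y - c| ≤ 2 * Λ * ε})))
  have hfin := hfinFar.union hfinNear
  refine ⟨hfin.subset hcover, (ncard_le_ncard hcover hfin).trans ?_, fun k hk hne => ?_⟩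
  · calc _ ≤ (indicesMeeting a b k₀ g F).ncard + ∑ i ∈ I, L := by
          refine (ncard_union_le _ _).trans (add_le_add (ncard_le_ncard
            (indicesMeeting_mono inter_subset_left) hS) ?_)
          exact (Finset.set_ncard_biUnion_le _ _).trans
            (Finset.sum_le_sum fun i hi => (hI i hi).2.1)
      _ ≤ (indicesMeeting a b k₀ g F).ncard + m * L := by
          rw [Finset.sum_const, smul_eq_mul]
          gcongr
          exact (Finset.card_filter_le _ _).trans (Finset.card_range m).le
      _ ≤ _ := by nlinarith
  have hk₁ : 1 ≤ k := hk₀.trans hk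
  rcases hcover ⟨hk, hne⟩ with ⟨-, y, -, ⟨-, hyfar⟩, hyB⟩ | hk'
  · refine two_rpow_neg_mul_le hk₁ (L := 0) (by omega) hε.le ?_ ((le_max_right _ _).trans hN.le)
    simp only [mem_ofPred_eq] at hyfar hyB
    rw [CharP.cast_eq_zero, mul_zero, Real.rpow_zero, div_mul_eq_mul_div,
      le_div_iff₀ (by linarith)]
    linarith
  · obtain ⟨i, hi, hk₀k, hki⟩ := mem_iUnion₂.1 hk'
    exact two_rpow_neg_mul_le hk₁ (by nlinarith) hε.le
      (((hI i hi).2.2 k hk₀k hki).trans (Finset.mem_filter.1 hi).2.2 |>.trans_eq (by ring))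
      ((le_max_left _ _).trans hN.le)

lemma IsPliableSeries.comp (H : IsPliableSeries a b c f k₀ cs g) (hk₀ : 1 ≤ k₀) (hab : a < b)
    (ha'b' : a' < b') (hcJ : c ∈ Icc a b) (hdsm : ContDiffOn ℝ (⊤ : ℕ∞) d (Icc a' b'))
    (hesm : ContDiffOn ℝ (⊤ : ℕ∞) e (Icc a b))
    (hde : ∀ x ∈ Icc a' b', d x ∈ Icc a b ∧ e (d x) = x)
    (hed : ∀ y ∈ Icc a b, e y ∈ Icc a' b' ∧ d (e y) = y) :
    IsPliableSeries a' b' (e c) (fun x => f (d x)) k₀ cs (fun k x => g k (d x)) where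
  sum_eq x hx := H.sum_eq (d x) (hde x hx).1
  cs_pos := H.cs_pos
  cs_superexp := H.cs_superexp
  g_smooth k hk := (H.g_smooth k hk).comp hdsm fun x hx => (hde x hx).1
  supp_compact k hk := by
    rw [suppOn_comp_eq_image _ hde hed hesm.continuousOn]
    exact (H.supp_compact k hk).image_of_continuousOn
      (hesm.continuousOn.mono (suppOn_subset_Icc a b _))
  supp_subset k hk := by
    rw [suppOn_comp_eq_image _ hde hed hesm.continuousOn]
    rintro _ ⟨y, hy, rfl⟩
    obtain ⟨hyJ, hyc⟩ := H.supp_subset k hk hy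
    refine ⟨(hed y hyJ).1, fun hyc' => hyc ?_⟩
    rw [mem_singleton_iff, ← (hed y hyJ).2, mem_singleton_iff.1 hyc', (hed c hcJ).2]
  supp_locFin x hx := by
    have hr : 0 < |x - e c| / 2 := by
      have := sub_ne_zero.2 hx.2
      positivity
    refine ⟨Metric.closedBall x (|x - e c| / 2), Metric.closedBall_mem_nhds x hr,
      H.finite_indicesMeeting ?_ ?_ |>.subset (indicesMeeting_comp_subset hde hed
        hesm.continuousOn _)⟩
    · exact (isCompact_closedBall x _).inter_right isClosed_Icc |>.image_of_continuousOn
        (hdsm.continuousOn.mono inter_subset_right)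
    · rintro _ ⟨z, ⟨hzx, hzK⟩, rfl⟩
      refine ⟨(hde z hzK).1, fun hdz => ?_⟩
      rw [Metric.mem_closedBall, Real.dist_eq, ← (hde z hzK).2, mem_singleton_iff.1 hdz] at hzx
      have := abs_sub_comm x (e c)
      linarith [abs_nonneg (x - e c)]
  norm_growth r := by
    obtain ⟨γ, M, hM⟩ := H.norm_growth r
    obtain ⟨C, hC0, hC⟩ := exists_crNorm_comp_le hab ha'b' hdsm (fun x hx => (hde x hx).1) r
    refine ⟨γ, C * M, fun k hk => ?_⟩
    calc (2 : ℝ) ^ (γ * k) * CrNorm r (fun x => g k (d x)) (Icc a' b')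
        ≤ 2 ^ (γ * k) * (C * CrNorm r (g k) (Icc a b)) :=
          mul_le_mul_of_nonneg_left (hC _ (H.g_smooth k hk)) (by positivity)
      _ = C * (2 ^ (γ * k) * CrNorm r (g k) (Icc a b)) := by ring
      _ ≤ C * M := mul_le_mul_of_nonneg_left (hM k hk) hC0
  index_bound := by
    obtain ⟨Kd, hKd⟩ := hdsm.exists_lipschitzOnWith (by simp) (convex_Icc _ _) isCompact_Icc
    obtain ⟨Ke, hKe⟩ := hesm.exists_lipschitzOnWith (by simp) (convex_Icc _ _) isCompact_Icc
    exact H.exists_annulusIndexBound_comp hk₀ hab hcJ (Λ := max (max Kd Ke) 1)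
      (lt_max_of_lt_right one_pos) (hKd.weaken (le_max_of_le_left (le_max_left _ _)))
      (hKe.weaken (le_max_of_le_left (le_max_right _ _))) hde hed hesm.continuousOn

end comp

theorem stmt13_general (a b c a' b' : ℝ) (hab : a < b) (ha'b' : a' < b') (hc : c = a ∨ c = b)
    (f : ℝ → ℝ)
    (hfpl : Pliable a b c f)
    (d e : ℝ → ℝ)
    (hdsm : ContDiffOn ℝ (⊤ : ℕ∞) d (Set.Icc a' b'))
    (hesm : ContDiffOn ℝ (⊤ : ℕ∞) e (Set.Icc a b))
    (hde : ∀ x ∈ Set.Icc a' b', d x ∈ Set.Icc a b ∧ e (d x) = x)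
    (hed : ∀ y ∈ Set.Icc a b, e y ∈ Set.Icc a' b' ∧ d (e y) = y) :
    Pliable a' b' (e c) (fun x => f (d x)) := by
  obtain ⟨k₀, cs, g, hk₀, H⟩ := hfpl.exists_isPliableSeries_one_le
  have hcJ : c ∈ Icc a b := by
    rcases hc with rfl | rfl
    exacts [left_mem_Icc.2 hab.le, right_mem_Icc.2 hab.le]
  exact ⟨k₀, cs, _, H.comp hk₀ hab ha'b' hcJ hdsm hesm hde hed⟩

/-- Lemma 4.1(e) of the paper. If `f` is pliable at the endpoint `c` of
`J = [a,b]` and `d : K = [a',b'] → J` is a `C^∞` diffeomorphism (with `C^∞` inverse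
`e`), then `f ∘ d` is pliable at `d⁻¹ c = e c`. -/
theorem stmt13 (a b c a' b' : ℝ) (hab : a < b) (ha'b' : a' < b') (hc : c = a ∨ c = b)
    (f : ℝ → ℝ) (hfsm : ContDiffOn ℝ (⊤ : ℕ∞) f (Set.Icc a b))
    (hfpl : Pliable a b c f)
    (d e : ℝ → ℝ)
    (hdsm : ContDiffOn ℝ (⊤ : ℕ∞) d (Set.Icc a' b'))
    (hesm : ContDiffOn ℝ (⊤ : ℕ∞) e (Set.Icc a b))
    (hde : ∀ x ∈ Set.Icc a' b', d x ∈ Set.Icc a b ∧ e (d x) = x)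
    (hed : ∀ y ∈ Set.Icc a b, e y ∈ Set.Icc a' b' ∧ d (e y) = y) :
    Pliable a' b' (e c) (fun x => f (d x)) :=
  stmt13_general a b c a' b' hab ha'b' hc f hfpl d e hdsm hesm hde hed
end
end

section
/- Let τ > 0 and let f ∈ C^∞([0,τ]) satisfy f(0) = 0, f^{(r)}(0) = 0 for all r ≥ 1, and f' > 0, f'' > 0 on (0,τ]. Fix d ∈ (0, τ/4). For γ ∈ (0, π/3) define h(x) = f(x + d/cos γ) on [−d/cos γ, τ − d/cos γ], R_γ(x) = x cos γ + h(x) sin γ, I_γ(x) = −x sin γ + h(x) cos γ, so that R_γ is strictly increasing and f_u := I_γ ∘ R_γ^{−1} is the function whose graph is obtained from the graph of f by translating left by d/cos γ and rotating clockwise by γ; set f_v(t) := f_u(−t). Then for every sufficiently small γ > 0 the domain of f_u contains [−d, d], there exists a unique ε > 0 such that f'(4ε) = tan γ, and for this ε one has f_u'(2ε − d) < 0 < f_v'(d − 2ε). -/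
open Set Filter Topology Real

noncomputable section

/-- `h(x) = f(x + d / cos γ)`, the leftwards translate of `f`. -/
def hAux (f : ℝ → ℝ) (d γ x : ℝ) : ℝ := f (x + d / Real.cos γ)

/-- The first coordinate of the clockwise rotation by `γ` of the graph of `hAux f d γ`. -/
def RAux (f : ℝ → ℝ) (d γ x : ℝ) : ℝ :=
  x * Real.cos γ + hAux f d γ x * Real.sin γ

/-- The second coordinate of the clockwise rotation by `γ` of the graph of `hAux f d γ`. -/
def IAux (f : ℝ → ℝ) (d γ x : ℝ) : ℝ :=
  -x * Real.sin γ + hAux f d γ x * Real.cos γ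

/-- The domain `[-d/cos γ, τ - d/cos γ]` of `hAux f d γ`. -/
def DomAux (τ d γ : ℝ) : Set ℝ :=
  Set.Icc (-(d / Real.cos γ)) (τ - d / Real.cos γ)

/-!
Rotating a graph clockwise by `γ` turns a tangent of slope `p = tan θ` into one of slope
`tan (θ - γ) = (p cos γ - sin γ) / (cos γ + p sin γ)`, which is negative exactly when `p < tan γ`.
Since `f'` increases strictly from `f' 0 = 0`, the equation `f' (4ε) = tan γ` has a unique solution
once `tan γ < f' (4d)`, and then `ε < d`. As `cos γ > 1/2`, the point of the rotated graph above
`2ε - d` comes from a point of the graph of `f` strictly left of `4ε`, where `f' < tan γ`; hence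
`f_u' (2ε - d) < 0`, and `f_v' (d - 2ε) = -f_u' (2ε - d)`.
-/

theorem strictMonoOn_Icc_of_derivWithin_pos {g : ℝ → ℝ} {a b : ℝ}
    (hg : DifferentiableOn ℝ g (Icc a b))
    (hpos : ∀ x ∈ Ioo a b, 0 < derivWithin g (Icc a b) x) : StrictMonoOn g (Icc a b) := by
  refine strictMonoOn_of_hasDerivWithinAt_pos (convex_Icc a b) hg.continuousOn
    (f' := derivWithin g (Icc a b)) (fun x hx => ?_) (fun x hx => ?_)
  · rw [interior_Icc] at hx ⊢
    exact (hg x (Ioo_subset_Icc_self hx)).hasDerivWithinAt.mono Ioo_subset_Icc_self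
  · rw [interior_Icc] at hx
    exact hpos x hx

theorem existsUnique_four_mul_eq {g : ℝ → ℝ} {τ t : ℝ} (hτ : 0 ≤ τ)
    (hg : ContinuousOn g (Icc 0 τ)) (hmono : StrictMonoOn g (Icc 0 τ)) (hg0 : g 0 = 0)
    (ht : 0 < t) (htτ : t ≤ g τ) : ∃! ε, 0 < ε ∧ 4 * ε ≤ τ ∧ g (4 * ε) = t := by
  obtain ⟨x, hx, hgx⟩ := intermediate_value_Icc hτ hg ⟨by rw [hg0]; exact ht.le, htτ⟩
  have hx0 : 0 < x := hx.1.lt_of_ne (by rintro rfl; linarith)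
  refine ⟨x / 4, ⟨by positivity, by linarith [hx.2], by rwa [mul_div_cancel₀ _ four_ne_zero]⟩, ?_⟩
  rintro ε ⟨hε, hετ, hgε⟩
  have := hmono.injOn ⟨by positivity, hετ⟩ hx (hgε.trans hgx.symm)
  linarith

theorem strictMonoOn_derivWithin_Icc_of_iteratedDerivWithin_two_pos {g : ℝ → ℝ} {a b : ℝ}
    (hab : a < b) (hg : ContDiffOn ℝ 2 g (Icc a b))
    (hpos : ∀ x ∈ Ioo a b, 0 < iteratedDerivWithin 2 g (Icc a b) x) :
    StrictMonoOn (derivWithin g (Icc a b)) (Icc a b) := by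
  refine strictMonoOn_Icc_of_derivWithin_pos
    ((hg.derivWithin (uniqueDiffOn_Icc hab) (m := 1) le_rfl).differentiableOn one_ne_zero)
    fun x hx => ?_
  simpa only [iteratedDerivWithin_succ', iteratedDerivWithin_zero] using hpos x hx

theorem one_half_lt_cos {γ : ℝ} (h₀ : 0 ≤ γ) (h : γ < π / 3) : 1 / 2 < cos γ :=
  cos_pi_div_three ▸ cos_lt_cos_of_nonneg_of_le_pi h₀ (by linarith [pi_pos]) h

theorem tan_lt_of_lt_arctan {γ a : ℝ} (h₀ : -(π / 2) < γ) (h : γ < arctan a) : tan γ < a := by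
  rwa [← arctan_tan h₀ (h.trans (arctan_lt_pi_div_two a)), arctan_lt_arctan_iff] at h

theorem HasDerivWithinAt.mul_eq_of_comp_eqOn {u φ ψ : ℝ → ℝ} {s : Set ℝ} {x a b L : ℝ}
    (hu : HasDerivWithinAt u L (φ '' s) (φ x)) (hφ : HasDerivWithinAt φ a s x)
    (hψ : HasDerivWithinAt ψ b s x) (heq : EqOn (u ∘ φ) ψ s) (hx : x ∈ s)
    (hs : UniqueDiffWithinAt ℝ s x) : L * a = b :=
  hs.eq_deriv _ ((hu.comp x hφ (mapsTo_image φ s)).congr_of_mem (fun _ hy => (heq hy).symm) hx) hψ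

theorem lt_zero_of_mul_eq_of_lt_tan {γ L p : ℝ} (hcos : 0 < cos γ) (hsin : 0 ≤ sin γ)
    (hp0 : 0 ≤ p) (hp : p < tan γ) (h : L * (cos γ + p * sin γ) = -sin γ + p * cos γ) :
    L < 0 := by
  rw [tan_eq_sin_div_cos, lt_div_iff₀ hcos] at hp
  rw [← eq_div_iff (by positivity)] at h
  rw [h]
  exact div_neg_of_neg_of_pos (by linarith) (by positivity)

section Rotation

variable {f : ℝ → ℝ} {τ d γ : ℝ}

theorem mapsTo_DomAux : MapsTo (· + d / cos γ) (DomAux τ d γ) (Icc 0 τ) := by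
  rintro x ⟨h₁, h₂⟩
  exact ⟨by linarith, by linarith⟩

theorem continuousOn_RAux (hfc : ContinuousOn f (Icc 0 τ)) :
    ContinuousOn (RAux f d γ) (DomAux τ d γ) :=
  (continuousOn_id.mul continuousOn_const).add
    ((hfc.comp (continuous_add_const _).continuousOn mapsTo_DomAux).mul continuousOn_const)

theorem strictMonoOn_RAux (hf : MonotoneOn f (Icc 0 τ)) (hcos : 0 < cos γ)
    (hsin : 0 ≤ sin γ) : StrictMonoOn (RAux f d γ) (DomAux τ d γ) := by
  intro x hx y hy hxy
  have := hf (mapsTo_DomAux hx) (mapsTo_DomAux hy) (by simp only; linarith)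
  simp only [RAux, hAux]
  nlinarith [mul_le_mul_of_nonneg_right this hsin]

theorem RAux_left (hf0 : f 0 = 0) (hcos : cos γ ≠ 0) : RAux f d γ (-(d / cos γ)) = -d := by
  simp [RAux, hAux, hf0, div_mul_cancel₀ _ hcos]

theorem le_RAux_right (hfτ : 0 ≤ f τ) (hcos : cos γ ≠ 0) (hsin : 0 ≤ sin γ)
    (h : 2 * d ≤ τ * cos γ) : d ≤ RAux f d γ (τ - d / cos γ) := by
  simp only [RAux, hAux, sub_add_cancel, sub_mul, div_mul_cancel₀ _ hcos]
  nlinarith [mul_nonneg hfτ hsin]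

theorem Icc_subset_image_RAux (hτ : 0 ≤ τ) (hfc : ContinuousOn f (Icc 0 τ)) (hf0 : f 0 = 0)
    (hfτ : 0 ≤ f τ) (hcos : cos γ ≠ 0) (hsin : 0 ≤ sin γ) (h : 2 * d ≤ τ * cos γ) :
    Icc (-d) d ⊆ RAux f d γ '' DomAux τ d γ := by
  have := intermediate_value_Icc (by linarith) (continuousOn_RAux (d := d) (γ := γ) hfc)
  rw [RAux_left hf0 hcos] at this
  exact fun z hz => this ⟨hz.1, hz.2.trans (le_RAux_right hfτ hcos hsin h)⟩

theorem hasDerivWithinAt_hAux {p x : ℝ}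
    (hf : HasDerivWithinAt f p (Icc 0 τ) (x + d / cos γ)) :
    HasDerivWithinAt (hAux f d γ) p (DomAux τ d γ) x :=
  (hf.comp x ((hasDerivWithinAt_id x _).add_const _) mapsTo_DomAux).congr_deriv (mul_one p)

theorem hasDerivWithinAt_RAux {s : Set ℝ} {p x : ℝ} (h : HasDerivWithinAt (hAux f d γ) p s x) :
    HasDerivWithinAt (RAux f d γ) (cos γ + p * sin γ) s x :=
  (((hasDerivWithinAt_id x s).mul_const (cos γ)).add (h.mul_const (sin γ))).congr_deriv
    (by rw [one_mul])

theorem hasDerivWithinAt_IAux {s : Set ℝ} {p x : ℝ} (h : HasDerivWithinAt (hAux f d γ) p s x) :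
    HasDerivWithinAt (IAux f d γ) (-sin γ + p * cos γ) s x :=
  (((hasDerivWithinAt_id x s).neg.mul_const (sin γ)).add (h.mul_const (cos γ))).congr_deriv
    (by rw [neg_one_mul])

theorem derivWithin_lt_zero_of_slope_lt_tan (hτ : 0 < τ) (hf : DifferentiableOn ℝ f (Icc 0 τ))
    (hcos : 0 < cos γ) (hsin : 0 ≤ sin γ) {fu : ℝ → ℝ}
    (hfu : DifferentiableOn ℝ fu (RAux f d γ '' DomAux τ d γ))
    (hfuR : ∀ x ∈ DomAux τ d γ, fu (RAux f d γ x) = IAux f d γ x) {x : ℝ} (hx : x ∈ DomAux τ d γ)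
    (hp0 : 0 ≤ derivWithin f (Icc 0 τ) (x + d / cos γ))
    (hp : derivWithin f (Icc 0 τ) (x + d / cos γ) < tan γ) :
    derivWithin fu (RAux f d γ '' DomAux τ d γ) (RAux f d γ x) < 0 := by
  have hh := hasDerivWithinAt_hAux (hf _ (mapsTo_DomAux hx)).hasDerivWithinAt
  refine lt_zero_of_mul_eq_of_lt_tan hcos hsin hp0 hp ?_
  exact (hfu _ (mem_image_of_mem _ hx)).hasDerivWithinAt.mul_eq_of_comp_eqOn
    (hasDerivWithinAt_RAux hh) (hasDerivWithinAt_IAux hh) hfuR hx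
    (uniqueDiffOn_Icc (by linarith) _ hx)

theorem derivWithin_lt_zero_at_two_mul_sub (hτ : 0 < τ) (hf : DifferentiableOn ℝ f (Icc 0 τ))
    (hfmono : MonotoneOn f (Icc 0 τ))
    (hf'mono : StrictMonoOn (derivWithin f (Icc 0 τ)) (Icc 0 τ))
    (hf'0 : derivWithin f (Icc 0 τ) 0 = 0) (hcos : 1 / 2 < cos γ) (hsin : 0 ≤ sin γ)
    (hsub : Icc (-d) d ⊆ RAux f d γ '' DomAux τ d γ) {ε : ℝ} (hε : 0 < ε) (hεd : ε ≤ d)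
    (hετ : 4 * ε ≤ τ) (hfε : 0 ≤ f (4 * ε)) (hεγ : derivWithin f (Icc 0 τ) (4 * ε) = tan γ)
    {fu : ℝ → ℝ} (hfu : DifferentiableOn ℝ fu (RAux f d γ '' DomAux τ d γ))
    (hfuR : ∀ x ∈ DomAux τ d γ, fu (RAux f d γ x) = IAux f d γ x) :
    derivWithin fu (RAux f d γ '' DomAux τ d γ) (2 * ε - d) < 0 := by
  have hcos0 : 0 < cos γ := by linarith
  obtain ⟨x, hx, hRx⟩ := hsub (show 2 * ε - d ∈ Icc (-d) d from ⟨by linarith, by linarith⟩)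
  have hx' : 4 * ε - d / cos γ ∈ DomAux τ d γ := ⟨by linarith, by linarith⟩
  have hRlt : RAux f d γ x < RAux f d γ (4 * ε - d / cos γ) := by
    rw [hRx]
    simp only [RAux, hAux, sub_add_cancel, sub_mul, div_mul_cancel₀ _ hcos0.ne']
    nlinarith [mul_nonneg hfε hsin]
  have hlt : x + d / cos γ < 4 * ε := by
    linarith [((strictMonoOn_RAux hfmono hcos0 hsin).lt_iff_lt hx hx').1 hRlt]
  have hxmem := mapsTo_DomAux hx
  rw [← hRx]
  refine derivWithin_lt_zero_of_slope_lt_tan hτ hf hcos0 hsin hfu hfuR hx ?_ ?_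
  · exact hf'0.symm.trans_le (hf'mono.monotoneOn ⟨le_rfl, hτ.le⟩ hxmem hxmem.1)
  · rw [← hεγ]
    exact hf'mono hxmem ⟨by positivity, hετ⟩ hlt

end Rotation

/-- Lemma 4.4 of the paper. Let `f ∈ C^∞([0,τ])` be infinitely flat at `0`
with `f' > 0`, `f'' > 0` on `(0,τ]`, and fix `d ∈ (0, τ/4)`. For every sufficiently
small `γ > 0`: `R_γ` is strictly increasing on the domain of `h`, the domain of
`f_u = I_γ ∘ R_γ⁻¹` contains `[-d, d]`, there is a unique `ε > 0` with
`f'(4ε) = tan γ`, and for this `ε` one has `f_u'(2ε - d) < 0 < f_v'(d - 2ε)`, where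
`f_v(t) = f_u(-t)`. -/
theorem stmt16 (τ : ℝ) (hτ : 0 < τ)
    (f : ℝ → ℝ) (hfsm : ContDiffOn ℝ (⊤ : ℕ∞) f (Set.Icc 0 τ))
    (hf0 : f 0 = 0)
    (hflat : ∀ s : ℕ, 1 ≤ s → iteratedDerivWithin s f (Set.Icc 0 τ) 0 = 0)
    (hf' : ∀ x ∈ Set.Ioc 0 τ, 0 < derivWithin f (Set.Icc 0 τ) x)
    (hf'' : ∀ x ∈ Set.Ioc 0 τ, 0 < iteratedDerivWithin 2 f (Set.Icc 0 τ) x)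
    (d : ℝ) (hd : d ∈ Set.Ioo 0 (τ / 4)) :
    ∃ γ₀ : ℝ, 0 < γ₀ ∧ γ₀ ≤ π / 3 ∧ ∀ γ : ℝ, 0 < γ → γ < γ₀ →
      StrictMonoOn (RAux f d γ) (DomAux τ d γ) ∧
      Set.Icc (-d) d ⊆ RAux f d γ '' DomAux τ d γ ∧
      (∃! ε : ℝ, 0 < ε ∧ 4 * ε ≤ τ ∧
        derivWithin f (Set.Icc 0 τ) (4 * ε) = Real.tan γ) ∧
      ∀ ε : ℝ, (0 < ε ∧ 4 * ε ≤ τ ∧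
          derivWithin f (Set.Icc 0 τ) (4 * ε) = Real.tan γ) →
        ∀ fu : ℝ → ℝ,
          ContDiffOn ℝ (⊤ : ℕ∞) fu (RAux f d γ '' DomAux τ d γ) →
          (∀ x ∈ DomAux τ d γ, fu (RAux f d γ x) = IAux f d γ x) →
          derivWithin fu (RAux f d γ '' DomAux τ d γ) (2 * ε - d) < 0 ∧
          0 < derivWithin (fun t => fu (-t))
              ((fun y => -y) '' (RAux f d γ '' DomAux τ d γ)) (d - 2 * ε) := by
  obtain ⟨hd0, hd4⟩ := hd
  have h0 : (0 : ℝ) ∈ Icc 0 τ := ⟨le_rfl, hτ.le⟩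
  have h4d : 4 * d ∈ Icc 0 τ := ⟨by linarith, by linarith⟩
  have hfd : DifferentiableOn ℝ f (Icc 0 τ) := hfsm.differentiableOn (by simp)
  have hfmono :=
    (strictMonoOn_Icc_of_derivWithin_pos hfd fun x hx => hf' x ⟨hx.1, hx.2.le⟩).monotoneOn
  have hf'mono := strictMonoOn_derivWithin_Icc_of_iteratedDerivWithin_two_pos hτ
    (hfsm.of_le (WithTop.coe_le_coe.mpr le_top)) fun x hx => hf'' x ⟨hx.1, hx.2.le⟩
  have hf'0 : derivWithin f (Icc 0 τ) 0 = 0 := by simpa using hflat 1 le_rfl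
  have hfnn : ∀ x ∈ Icc 0 τ, 0 ≤ f x := fun x hx => hf0 ▸ hfmono h0 hx hx.1
  refine ⟨min (π / 3) (arctan (derivWithin f (Icc 0 τ) (4 * d))),
    lt_min (by positivity) (arctan_pos.2 (hf' _ ⟨by linarith, h4d.2⟩)), min_le_left _ _,
    fun γ hγ hγ₀ => ?_⟩
  have hγπ : γ < π / 3 := hγ₀.trans_le (min_le_left _ _)
  have hcos := one_half_lt_cos hγ.le hγπ
  have hsin : 0 ≤ sin γ := sin_nonneg_of_nonneg_of_le_pi hγ.le (by linarith [pi_pos])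
  have htan := tan_lt_of_lt_arctan (by linarith [pi_pos]) (hγ₀.trans_le (min_le_right _ _))
  have hsub : Icc (-d) d ⊆ RAux f d γ '' DomAux τ d γ :=
    Icc_subset_image_RAux hτ.le hfsm.continuousOn hf0 (hfnn τ ⟨hτ.le, le_rfl⟩)
      (by linarith : (0 : ℝ) < cos γ).ne' hsin (by nlinarith [mul_lt_mul_of_pos_left hcos hτ])
  refine ⟨strictMonoOn_RAux hfmono (by linarith) hsin, hsub,
    existsUnique_four_mul_eq hτ.le (hfsm.continuousOn_derivWithin (uniqueDiffOn_Icc hτ) (by simp))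
      hf'mono hf'0 (tan_pos_of_pos_of_lt_pi_div_two hγ (by linarith [pi_pos]))
      (htan.le.trans (hf'mono.monotoneOn h4d ⟨hτ.le, le_rfl⟩ h4d.2)), ?_⟩
  rintro ε ⟨hε, hετ, hεγ⟩ fu hfu hfuR
  have h4ε : 4 * ε ∈ Icc 0 τ := ⟨by positivity, hετ⟩
  have hεd : ε < d := by linarith [(hf'mono.lt_iff_lt h4ε h4d).1 (hεγ ▸ htan)]
  have hneg := derivWithin_lt_zero_at_two_mul_sub hτ hfd hfmono hf'mono hf'0 hcos hsin
    hsub hε hεd.le hετ (hfnn _ h4ε) hεγ (hfu.differentiableOn (by simp)) hfuR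
  refine ⟨hneg, ?_⟩
  rw [derivWithin_comp_neg, image_neg_eq_neg, neg_neg, neg_sub]
  linarith
end
end
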